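/- The map R : ℝ² → ℝ² defined by R(x, y) = (cos x · sin y, − sin x · cos y) is 1-Lipschitz with respect to the Euclidean norm: for all z, z' ∈ ℝ², ‖R(z) − R(z')‖ ≤ ‖z − z'‖. -/

import Mathlib

/-!
By the product-to-sum formulas, `cos x sin y` and `sin x cos y` are half the difference and half
the sum of `sin (x + y)` and `sin (x - y)`. So `R` factors as `(x, y) ↦ (x + y, x - y)`, which
multiplies Euclidean lengths by `√2`, then `sin` in each coordinate, which is 1-Lipschitz, then
`(a, b) ↦ ((a - b) / 2, (a + b) / 2)`, which multiplies lengths by `1 / √2`.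
-/

/-- The rotation-type operator `R(x, y) = (cos x · sin y, − sin x · cos y)`. -/
noncomputable def rotOp : EuclideanSpace ℝ (Fin 2) → EuclideanSpace ℝ (Fin 2) :=
  fun p => (WithLp.equiv 2 (Fin 2 → ℝ)).symm
    ![Real.cos (p 0) * Real.sin (p 1), -(Real.sin (p 0)) * Real.cos (p 1)]

namespace Real

theorem sq_sin_sub_sin_le (a b : ℝ) : (sin a - sin b) ^ 2 ≤ (a - b) ^ 2 :=
  sq_le_sq.2 (abs_sin_sub_sin_le a b)

theorem cos_mul_sin (x y : ℝ) : cos x * sin y = (sin (x + y) - sin (x - y)) / 2 := by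
  rw [sin_add, sin_sub]; ring

theorem sin_mul_cos (x y : ℝ) : sin x * cos y = (sin (x + y) + sin (x - y)) / 2 := by
  rw [sin_add, sin_sub]; ring

theorem sq_cos_mul_sin_sub_add_sq_sin_mul_cos_sub_le (x y x' y' : ℝ) :
    (cos x * sin y - cos x' * sin y') ^ 2 + (sin x * cos y - sin x' * cos y') ^ 2 ≤
      (x - x') ^ 2 + (y - y') ^ 2 := by
  rw [cos_mul_sin, cos_mul_sin, sin_mul_cos, sin_mul_cos]
  linear_combination
    (sq_sin_sub_sin_le (x + y) (x' + y') + sq_sin_sub_sin_le (x - y) (x' - y')) / 2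

end Real

/-- `R` is 1-Lipschitz in the Euclidean norm. -/
theorem rotOp_lipschitz :
    ∀ z z' : EuclideanSpace ℝ (Fin 2), ‖rotOp z - rotOp z'‖ ≤ ‖z - z'‖ := by
  intro z z'
  refine (sq_le_sq₀ (norm_nonneg _) (norm_nonneg _)).1 ?_
  simp only [EuclideanSpace.real_norm_sq_eq, Fin.sum_univ_two, rotOp, WithLp.equiv_symm_apply,
    PiLp.sub_apply, Matrix.cons_val_zero, Matrix.cons_val_one]
  linear_combination Real.sq_cos_mul_sin_sub_add_sq_sin_mul_cos_sub_le (z 0) (z 1) (z' 0) (z' 1)
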